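/- arXiv:1611.06530 — 2 statements merged into one kernel-verified Lean document; each statement's English description precedes it below -/
import Mathlib

section
/- Let a Type-I recurrent unit on input type X, output type Y and state type S with initial state s₀, update F : X → S → S and output G : X → S → Y be given, and fix an element x₀ : X. Define a Type-II recurrent unit on the state type X × S with initial state (x₀, s₀), update f : X → X × S → X × S given by f x (x', s) = (x, F x s), and output g : X × S → Y given by g (x', s) = G x' s. Then for every input sequence x : ℕ → X and every time t ≥ 1, the Type-II state trajectory s̃ satisfies s̃ t = (x t, s t), where s is the Type-I state trajectory of x. -/
/-- The state trajectory of an input sequence `x` under update `F` and initial state `s₀`. -/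
def traj {X S : Type*} (s₀ : S) (F : X → S → S) (x : ℕ → X) : ℕ → S
  | 0 => s₀
  | t + 1 => F (x (t + 1)) (traj s₀ F x t)

theorem map_traj {X S T : Type*} (π : S → T) (s₀ : S) (f : X → S → S) (F : X → T → T)
    (hπ : ∀ x s, π (f x s) = F x (π s)) (x : ℕ → X) (t : ℕ) :
    π (traj s₀ f x t) = traj (π s₀) F x t := by
  induction t with
  | zero => rfl
  | succ t ih => rw [traj, traj, hπ, ih]

theorem typeII_state_of_typeI_general {X S : Type*} (s₀ : S) (F : X → S → S)
    (x₀ : X)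
    (f : X → X × S → X × S) (hf : ∀ x p, f x p = (x, F x p.2))
    (x : ℕ → X) (t : ℕ) (ht : 1 ≤ t) :
    traj (x₀, s₀) f x t = (x t, traj s₀ F x t) := by
  have hsnd : ∀ n, (traj (x₀, s₀) f x n).2 = traj s₀ F x n :=
    map_traj Prod.snd (x₀, s₀) f F (fun x p => by rw [hf]) x
  obtain ⟨n, rfl⟩ := Nat.exists_eq_add_of_le' ht
  rw [traj, hf, hsnd, traj]

/-- For the Type-II unit on state type `X × S` with initial state `(x₀, s₀)` and update
`f x (x', s) = (x, F x s)`, the Type-II state trajectory at each time `t ≥ 1` equals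
`(x t, s t)`, where `s` is the Type-I state trajectory of `x`. -/
theorem typeII_state_of_typeI {X Y S : Type*} (s₀ : S) (F : X → S → S)
    (G : X → S → Y) (x₀ : X)
    (f : X → X × S → X × S) (hf : ∀ x p, f x p = (x, F x p.2))
    (x : ℕ → X) (t : ℕ) (ht : 1 ≤ t) :
    traj (x₀, s₀) f x t = (x t, traj s₀ F x t) :=
  typeII_state_of_typeI_general s₀ F x₀ f hf x t ht
end

section
/- Every causal input-output map admits a Type-I state-space representation. Precisely: fix types X and Y with X nonempty, and let J be a map sending each input sequence x : ℕ → X to an output sequence J x : ℕ → Y which is causal, meaning that whenever two input sequences x and x' satisfy x u = x' u for all u with 1 ≤ u ≤ t, then J x t = J x' t. Then there exist an initial state s₀ : List X and functions F : X → List X → List X and G : X → List X → Y such that for every input sequence x : ℕ → X and every t ≥ 1, J x t = G (x t) (s t), where s is the state trajectory of x under F and s₀. -/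
/-!
The state records the whole input history `[x 1, …, x t]`. The output map replays this
history as an input sequence, padded with the current input, and applies `J`; by causality
`J` cannot tell the replayed sequence from the true one at time `t`.
-/

section History

variable {X : Type*}

theorem traj_append_eq_map_range (x : ℕ → X) (t : ℕ) :
    traj [] (fun a s => s ++ [a]) x t = (List.range t).map (fun i => x (i + 1)) := by
  induction t with
  | zero => rfl
  | succ t ih => simp [traj, ih, List.range_succ]

def replay (s : List X) (a : X) (u : ℕ) : X :=
  s.getD (u - 1) a

theorem replay_map_range_eq (x : ℕ → X) (a : X) {t u : ℕ} (hu₁ : 1 ≤ u) (hu : u ≤ t) :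
    replay ((List.range t).map (fun i => x (i + 1))) a u = x u := by
  have hlt : u - 1 < t := by omega
  simp [replay, List.getD_eq_getElem?_getD, List.getElem?_range hlt, Nat.sub_add_cancel hu₁]

end History

theorem causal_admits_typeI_general (X Y : Type) (J : (ℕ → X) → (ℕ → Y))
    (hJ : ∀ (x x' : ℕ → X) (t : ℕ),
      (∀ u, 1 ≤ u → u ≤ t → x u = x' u) → J x t = J x' t) :
    ∃ (s₀ : List X) (F : X → List X → List X) (G : X → List X → Y),
      ∀ (x : ℕ → X) (t : ℕ), 1 ≤ t → J x t = G (x t) (traj s₀ F x t) := by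
  refine ⟨[], fun a s => s ++ [a], fun a s => J (replay s a) s.length, fun x t _ => ?_⟩
  simp only [traj_append_eq_map_range, List.length_map, List.length_range]
  exact hJ _ _ t fun u hu₁ hu => (replay_map_range_eq x (x t) hu₁ hu).symm

/-- Every causal input-output map admits a Type-I state-space representation with
state type `List X`. -/
theorem causal_admits_typeI (X Y : Type) [Nonempty X] (J : (ℕ → X) → (ℕ → Y))
    (hJ : ∀ (x x' : ℕ → X) (t : ℕ),
      (∀ u, 1 ≤ u → u ≤ t → x u = x' u) → J x t = J x' t) :
    ∃ (s₀ : List X) (F : X → List X → List X) (G : X → List X → Y),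
      ∀ (x : ℕ → X) (t : ℕ), 1 ≤ t → J x t = G (x t) (traj s₀ F x t) :=
  causal_admits_typeI_general X Y J hJ
end
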